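/- arXiv:2110.00747 — 6 statements merged into one kernel-verified Lean document; each statement's English description precedes it below -/
import Mathlib

section
/- Let ρ be a density matrix with tr(M_n ρ) > 0 for all n. Then for every density matrix σ with tr(M_n σ) > 0 for all n, one has f(ρ) − f(σ) ≤ log λ_max(R(ρ)) = λ_max(log R(ρ)), where λ_max denotes the largest eigenvalue. In particular f(ρ) − f(ρ̂) ≤ max_{σ ∈ 𝒟} tr(σ · log R(ρ)) for any minimizer ρ̂ of f over 𝒟. -/
open Matrix
open scoped ComplexOrder

/-- `matFun g A`: apply a real function `g` to a Hermitian matrix `A` via its spectral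
decomposition (junk value `0` if `A` is not Hermitian). -/
noncomputable def matFun {D : ℕ} (g : ℝ → ℝ) (A : Matrix (Fin D) (Fin D) ℂ) :
    Matrix (Fin D) (Fin D) ℂ :=
  if hA : A.IsHermitian then
    (hA.eigenvectorUnitary : Matrix (Fin D) (Fin D) ℂ) *
      Matrix.diagonal (fun i => (g (hA.eigenvalues i) : ℂ)) *
      star (hA.eigenvectorUnitary : Matrix (Fin D) (Fin D) ℂ)
  else 0

/-- Matrix logarithm of a Hermitian (positive definite) matrix. -/
noncomputable def mlog {D : ℕ} (A : Matrix (Fin D) (Fin D) ℂ) : Matrix (Fin D) (Fin D) ℂ :=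
  matFun Real.log A

/-- Matrix exponential of a Hermitian matrix. -/
noncomputable def mexp {D : ℕ} (A : Matrix (Fin D) (Fin D) ℂ) : Matrix (Fin D) (Fin D) ℂ :=
  matFun Real.exp A

/-- `R(ρ) = (1/N) ∑ₙ Mₙ / tr(Mₙ ρ)`. -/
noncomputable def Rmat {D N : ℕ} (M : Fin N → Matrix (Fin D) (Fin D) ℂ)
    (ρ : Matrix (Fin D) (Fin D) ℂ) : Matrix (Fin D) (Fin D) ℂ :=
  (N : ℝ)⁻¹ • ∑ n, (((M n * ρ).trace.re)⁻¹ • M n)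

/-- `f(ρ) = (1/N) ∑ₙ −log tr(Mₙ ρ)`. -/
noncomputable def fobj {D N : ℕ} (M : Fin N → Matrix (Fin D) (Fin D) ℂ)
    (ρ : Matrix (Fin D) (Fin D) ℂ) : ℝ :=
  (N : ℝ)⁻¹ * ∑ n, (- Real.log ((M n * ρ).trace.re))

section Aux

variable {D : ℕ}

lemma diag_nonneg_of_psd {B : Matrix (Fin D) (Fin D) ℂ} (hB : B.PosSemidef) (i : Fin D) :
    0 ≤ B i i := by
  have h := hB.dotProduct_mulVec_nonneg (Pi.single i 1)
  simpa [dotProduct, Matrix.mulVec_single, Pi.single_apply, mul_ite, ite_mul,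
    Finset.sum_ite_eq'] using h

lemma trace_conj_diag (V : Matrix (Fin D) (Fin D) ℂ) (e : Fin D → ℂ)
    (τ : Matrix (Fin D) (Fin D) ℂ) :
    ((V * Matrix.diagonal e * star V) * τ).trace
      = ∑ i, e i * (star V * τ * V) i i := by
  rw [show (V * Matrix.diagonal e * star V) * τ
      = V * (Matrix.diagonal e * (star V * τ)) from by simp [mul_assoc],
    Matrix.trace_mul_comm]
  rw [show Matrix.diagonal e * (star V * τ) * V
      = Matrix.diagonal e * (star V * τ * V) from by simp [mul_assoc]]
  simp [Matrix.trace, Matrix.diag, Matrix.diagonal_mul]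

lemma key_le (U : Matrix.unitaryGroup (Fin D) ℂ) (d : Fin D → ℝ) (c : ℝ) (hc : ∀ i, d i ≤ c)
    {τ : Matrix (Fin D) (Fin D) ℂ} (hτ : τ.PosSemidef) (hτtr : τ.trace = 1) :
    ((((U : Matrix (Fin D) (Fin D) ℂ) * Matrix.diagonal (fun i => (d i : ℂ)) *
        star (U : Matrix (Fin D) (Fin D) ℂ)) * τ).trace).re ≤ c := by
  set V := (U : Matrix (Fin D) (Fin D) ℂ) with hV
  have hVV : V * star V = 1 := Matrix.mem_unitaryGroup_iff.mp U.2
  set B := star V * τ * V with hBdef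
  have hBpsd : B.PosSemidef := by
    have := hτ.conjTranspose_mul_mul_same V
    simpa [Matrix.star_eq_conjTranspose, hBdef] using this
  have hBtr : B.trace = 1 := by
    rw [hBdef, Matrix.trace_mul_cycle, hVV, one_mul, hτtr]
  have hdiag : ∀ i, 0 ≤ (B i i).re := by
    intro i
    exact (Complex.le_def.mp (diag_nonneg_of_psd hBpsd i)).1
  have hsum1 : ∑ i, (B i i).re = 1 := by
    have : (B.trace).re = 1 := by rw [hBtr]; simp
    simpa [Matrix.trace, Matrix.diag, Complex.re_sum] using this
  rw [trace_conj_diag, Complex.re_sum]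
  calc ∑ i, ((d i : ℂ) * B i i).re
      = ∑ i, d i * (B i i).re := by
        refine Finset.sum_congr rfl fun i _ => ?_
        rw [Complex.re_ofReal_mul]
    _ ≤ ∑ i, c * (B i i).re :=
        Finset.sum_le_sum fun i _ => mul_le_mul_of_nonneg_right (hc i) (hdiag i)
    _ = c := by rw [← Finset.mul_sum, hsum1, mul_one]

lemma key_exists (U : Matrix.unitaryGroup (Fin D) ℂ) (d : Fin D → ℝ) (j : Fin D) :
    ∃ τ : Matrix (Fin D) (Fin D) ℂ, τ.PosSemidef ∧ τ.trace = 1 ∧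
      ((((U : Matrix (Fin D) (Fin D) ℂ) * Matrix.diagonal (fun i => (d i : ℂ)) *
        star (U : Matrix (Fin D) (Fin D) ℂ)) * τ).trace).re = d j := by
  set V := (U : Matrix (Fin D) (Fin D) ℂ) with hV
  have hVV' : star V * V = 1 := Matrix.mem_unitaryGroup_iff'.mp U.2
  set Dg := Matrix.diagonal (Pi.single j (1 : ℂ)) with hDg
  refine ⟨V * Dg * star V, ?_, ?_, ?_⟩
  · have h0 : Dg.PosSemidef := by
      refine Matrix.posSemidef_diagonal_iff.mpr fun i => ?_
      by_cases h : i = j <;> simp [Pi.single_apply, h]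
    have := h0.mul_mul_conjTranspose_same V
    simpa [Matrix.star_eq_conjTranspose] using this
  · rw [Matrix.trace_mul_cycle, hVV', one_mul, hDg, Matrix.trace_diagonal]
    simp
  · rw [trace_conj_diag]
    have hB : star V * (V * Dg * star V) * V = Dg := by
      rw [show star V * (V * Dg * star V) * V = (star V * V) * Dg * (star V * V) from by
        simp [mul_assoc], hVV', one_mul, mul_one]
    rw [hB]
    simp [hDg, Matrix.diagonal_apply, Pi.single_apply, mul_ite, Finset.sum_ite_eq']

lemma key_sSup (hD : 0 < D) (U : Matrix.unitaryGroup (Fin D) ℂ) (d : Fin D → ℝ)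
    (L : Matrix (Fin D) (Fin D) ℂ)
    (hL : L = (U : Matrix (Fin D) (Fin D) ℂ) * Matrix.diagonal (fun i => (d i : ℂ)) *
        star (U : Matrix (Fin D) (Fin D) ℂ)) :
    sSup {x : ℝ | ∃ τ : Matrix (Fin D) (Fin D) ℂ,
        τ.PosSemidef ∧ τ.trace = 1 ∧ x = ((L * τ).trace).re} = ⨆ i, d i := by
  haveI : Nonempty (Fin D) := ⟨⟨0, hD⟩⟩
  obtain ⟨j, hj⟩ := Finite.exists_max d
  have hbdd : BddAbove (Set.range d) := Set.Finite.bddAbove (Set.finite_range d)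
  have hsup : (⨆ i, d i) = d j := le_antisymm (ciSup_le hj) (le_ciSup hbdd j)
  have hub : ∀ x ∈ {x : ℝ | ∃ τ : Matrix (Fin D) (Fin D) ℂ,
      τ.PosSemidef ∧ τ.trace = 1 ∧ x = ((L * τ).trace).re}, x ≤ ⨆ i, d i := by
    rintro x ⟨τ, h1, h2, rfl⟩
    rw [hL]
    exact key_le U d _ (fun i => le_ciSup hbdd i) h1 h2
  obtain ⟨τ, h1, h2, h3⟩ := key_exists U d j
  have hmem : (⨆ i, d i) ∈ {x : ℝ | ∃ τ : Matrix (Fin D) (Fin D) ℂ,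
      τ.PosSemidef ∧ τ.trace = 1 ∧ x = ((L * τ).trace).re} :=
    ⟨τ, h1, h2, by rw [hL, h3, hsup]⟩
  exact le_antisymm (csSup_le ⟨_, hmem⟩ hub) (le_csSup ⟨_, hub⟩ hmem)

end Aux

/-- Lemma 1 (error bound): `f(ρ) − f(σ) ≤ log λ_max(R(ρ)) = λ_max(log R(ρ))`, and in
particular the bound by `max_{σ ∈ 𝒟} tr(σ log R(ρ))`. -/
theorem stmt1 {D N : ℕ} (hD : 0 < D) (hN : 0 < N)
    (M : Fin N → Matrix (Fin D) (Fin D) ℂ)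
    (hM : ∀ n, (M n).PosSemidef) (hMne : ∀ n, M n ≠ 0)
    (hker : ∀ v : Fin D → ℂ, (∀ n, (M n) *ᵥ v = 0) → v = 0)
    (ρ σ : Matrix (Fin D) (Fin D) ℂ)
    (hρ : ρ.PosSemidef) (hρtr : ρ.trace = 1) (hρpos : ∀ n, 0 < (M n * ρ).trace.re)
    (hσ : σ.PosSemidef) (hσtr : σ.trace = 1) (hσpos : ∀ n, 0 < (M n * σ).trace.re)
    (hR : (Rmat M ρ).IsHermitian) (hLR : (mlog (Rmat M ρ)).IsHermitian) :
    fobj M ρ - fobj M σ ≤ Real.log (⨆ i, hR.eigenvalues i) ∧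
    Real.log (⨆ i, hR.eigenvalues i) = ⨆ i, hLR.eigenvalues i ∧
    fobj M ρ - fobj M σ ≤
      sSup {x : ℝ | ∃ τ : Matrix (Fin D) (Fin D) ℂ,
        τ.PosSemidef ∧ τ.trace = 1 ∧ x = ((mlog (Rmat M ρ)) * τ).trace.re} := by
  haveI : Nonempty (Fin D) := ⟨⟨0, hD⟩⟩
  haveI : Nonempty (Fin N) := ⟨⟨0, hN⟩⟩
  have hNne : (N : ℝ) ≠ 0 := Nat.cast_ne_zero.mpr hN.ne'
  set a : Fin N → ℝ := fun n => ((M n * ρ).trace).re with ha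
  set b : Fin N → ℝ := fun n => ((M n * σ).trace).re with hb
  -- trace formula
  have htr : ((Rmat M ρ * σ).trace).re = (N : ℝ)⁻¹ * ∑ n, (a n)⁻¹ * b n := by
    simp [Rmat, Matrix.smul_mul, Matrix.sum_mul, Matrix.trace_sum, Matrix.trace_smul,
      Complex.real_smul, Complex.re_ofReal_mul, Complex.re_sum]
    exact Or.inl rfl
  have tpos : ∀ n, 0 < (a n)⁻¹ * b n := fun n => mul_pos (inv_pos.mpr (hρpos n)) (hσpos n)
  have htrpos : 0 < ((Rmat M ρ * σ).trace).re := by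
    rw [htr]
    exact mul_pos (inv_pos.mpr (by exact_mod_cast hN))
      (Finset.sum_pos (fun n _ => tpos n) Finset.univ_nonempty)
  -- f difference
  have hfd : fobj M ρ - fobj M σ = ∑ n, (N : ℝ)⁻¹ • Real.log ((a n)⁻¹ * b n) := by
    simp only [fobj, smul_eq_mul]
    rw [← mul_sub, ← Finset.sum_sub_distrib, Finset.mul_sum]
    refine Finset.sum_congr rfl fun n _ => ?_
    rw [Real.log_mul (inv_ne_zero (hρpos n).ne') (hσpos n).ne', Real.log_inv]
    ring
  have hw1 : ∑ _n : Fin N, (N : ℝ)⁻¹ = 1 := by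
    rw [Finset.sum_const, Finset.card_fin, nsmul_eq_mul, mul_inv_cancel₀ hNne]
  have jensen : fobj M ρ - fobj M σ ≤ Real.log (((Rmat M ρ * σ).trace).re) := by
    rw [hfd]
    have h := (strictConcaveOn_log_Ioi.concaveOn).le_map_sum
      (t := Finset.univ) (w := fun _ : Fin N => (N : ℝ)⁻¹) (p := fun n => (a n)⁻¹ * b n)
      (fun i _ => by positivity) hw1 (fun i _ => tpos i)
    have he : ∑ n, (N : ℝ)⁻¹ • ((a n)⁻¹ * b n) = ((Rmat M ρ * σ).trace).re := by
      rw [htr, Finset.mul_sum]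
      simp [smul_eq_mul]
    rwa [he] at h
  -- spectral decomposition of R
  have hRdef : Rmat M ρ = (hR.eigenvectorUnitary : Matrix (Fin D) (Fin D) ℂ) *
      Matrix.diagonal (fun i => ((hR.eigenvalues i : ℝ) : ℂ)) *
      star (hR.eigenvectorUnitary : Matrix (Fin D) (Fin D) ℂ) := hR.spectral_theorem
  have hbddR : BddAbove (Set.range hR.eigenvalues) := Set.Finite.bddAbove (Set.finite_range _)
  have part1 : fobj M ρ - fobj M σ ≤ Real.log (⨆ i, hR.eigenvalues i) := by
    refine jensen.trans (Real.log_le_log htrpos ?_)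
    have h2 : ((((hR.eigenvectorUnitary : Matrix (Fin D) (Fin D) ℂ) *
        Matrix.diagonal (fun i => ((hR.eigenvalues i : ℝ) : ℂ)) *
        star (hR.eigenvectorUnitary : Matrix (Fin D) (Fin D) ℂ)) * σ).trace).re
        ≤ ⨆ i, hR.eigenvalues i :=
      key_le hR.eigenvectorUnitary hR.eigenvalues _ (fun i => le_ciSup hbddR i) hσ hσtr
    calc ((Rmat M ρ * σ).trace).re
        = ((((hR.eigenvectorUnitary : Matrix (Fin D) (Fin D) ℂ) *
            Matrix.diagonal (fun i => ((hR.eigenvalues i : ℝ) : ℂ)) *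
            star (hR.eigenvectorUnitary : Matrix (Fin D) (Fin D) ℂ)) * σ).trace).re := by
          conv_lhs => rw [hRdef]
      _ ≤ ⨆ i, hR.eigenvalues i := h2
  -- positive definiteness of R
  have hRpd : (Rmat M ρ).PosDef := by
    refine Matrix.PosDef.of_dotProduct_mulVec_pos hR fun x hx => ?_
    have hq : ∀ n, 0 ≤ star x ⬝ᵥ (M n) *ᵥ x := fun n => (hM n).dotProduct_mulVec_nonneg x
    have hex : ∃ n, star x ⬝ᵥ (M n) *ᵥ x ≠ 0 := by
      by_contra h
      push_neg at h
      exact hx (hker x fun n => ((hM n).dotProduct_mulVec_zero_iff x).mp (h n))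
    obtain ⟨n₀, hn₀⟩ := hex
    have hmv0 : (∑ n, (a n)⁻¹ • M n) *ᵥ x = ∑ n, ((a n)⁻¹ • M n) *ᵥ x :=
      map_sum (Matrix.mulVec.addMonoidHomLeft x) _ Finset.univ
    have hds : ∀ y : Fin N → (Fin D → ℂ), star x ⬝ᵥ (∑ n, y n) = ∑ n, star x ⬝ᵥ y n := by
      intro y
      simp only [dotProduct, Finset.sum_apply, Finset.mul_sum]
      exact Finset.sum_comm
    have hcalc : star x ⬝ᵥ (Rmat M ρ) *ᵥ x
        = (N : ℝ)⁻¹ • ∑ n, (a n)⁻¹ • (star x ⬝ᵥ (M n) *ᵥ x) := by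
      rw [Rmat, Matrix.smul_mulVec, dotProduct_smul, hmv0]
      congr 1
      rw [hds]
      refine Finset.sum_congr rfl fun n _ => ?_
      rw [Matrix.smul_mulVec, dotProduct_smul]
    rw [hcalc, Complex.real_smul]
    refine mul_pos (Complex.zero_lt_real.mpr (inv_pos.mpr (by exact_mod_cast hN))) ?_
    refine Finset.sum_pos' (fun n _ => ?_) ⟨n₀, Finset.mem_univ n₀, ?_⟩
    · rw [Complex.real_smul]
      exact mul_nonneg (Complex.zero_le_real.mpr (inv_nonneg.mpr (hρpos n).le)) (hq n)
    · rw [Complex.real_smul]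
      exact mul_pos (Complex.zero_lt_real.mpr (inv_pos.mpr (hρpos n₀)))
        (lt_of_le_of_ne (hq n₀) (Ne.symm hn₀))
  have hev : ∀ i, 0 < hR.eigenvalues i := fun i => hRpd.eigenvalues_pos i
  obtain ⟨j, hj⟩ := Finite.exists_max hR.eigenvalues
  have hsupR : (⨆ i, hR.eigenvalues i) = hR.eigenvalues j :=
    le_antisymm (ciSup_le hj) (le_ciSup hbddR j)
  have hbddL : BddAbove (Set.range fun i => Real.log (hR.eigenvalues i)) :=
    Set.Finite.bddAbove (Set.finite_range _)
  have hlogsup : Real.log (⨆ i, hR.eigenvalues i) = ⨆ i, Real.log (hR.eigenvalues i) := by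
    rw [hsupR]
    exact le_antisymm (le_ciSup hbddL j) (ciSup_le fun i => Real.log_le_log (hev i) (hj i))
  -- decompositions of mlog R
  have hLdef1 : mlog (Rmat M ρ) = (hR.eigenvectorUnitary : Matrix (Fin D) (Fin D) ℂ) *
      Matrix.diagonal (fun i => ((Real.log (hR.eigenvalues i) : ℝ) : ℂ)) *
      star (hR.eigenvectorUnitary : Matrix (Fin D) (Fin D) ℂ) := by
    unfold mlog matFun
    rw [dif_pos hR]
  have hLdef2 : mlog (Rmat M ρ) = (hLR.eigenvectorUnitary : Matrix (Fin D) (Fin D) ℂ) *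
      Matrix.diagonal (fun i => ((hLR.eigenvalues i : ℝ) : ℂ)) *
      star (hLR.eigenvectorUnitary : Matrix (Fin D) (Fin D) ℂ) := hLR.spectral_theorem
  have hS1 := key_sSup hD hR.eigenvectorUnitary (fun i => Real.log (hR.eigenvalues i))
    (mlog (Rmat M ρ)) hLdef1
  have hS2 := key_sSup hD hLR.eigenvectorUnitary hLR.eigenvalues (mlog (Rmat M ρ)) hLdef2
  refine ⟨part1, ?_, ?_⟩
  · rw [hlogsup, ← hS1, hS2]
  · rw [hS1, ← hlogsup]
    exact part1
end

section
/- (Hermitian extension of Lavergne's Cauchy–Schwarz inequality.) Let r_1, …, r_N be Hermitian positive semi-definite D×D complex matrices whose sum ∑_{n=1}^N r_n is positive definite, and let c_1, …, c_N be real numbers. Then the Hermitian matrix (1/N) ∑_{n=1}^N c_n² r_n − ((1/N) ∑_{n=1}^N c_n r_n) · ((1/N) ∑_{n=1}^N r_n)^{−1} · ((1/N) ∑_{n=1}^N c_n r_n) is positive semi-definite. -/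
open Matrix
open scoped ComplexOrder

private lemma psd_smul {d : Type*} [Fintype d] {M : Matrix d d ℂ} (hM : M.PosSemidef)
    {a : ℝ} (ha : 0 ≤ a) : (a • M).PosSemidef := by
  constructor
  · unfold Matrix.IsHermitian
    rw [conjTranspose_smul, star_trivial, hM.1.eq]
  · exact (hM.smul ha).2

private lemma sum_psd {d : Type*} [Fintype d] {N : ℕ} (M : Fin N → Matrix d d ℂ)
    (h : ∀ n, (M n).PosSemidef) : (∑ n, M n).PosSemidef := by
  classical
  refine Finset.sum_induction M _ (fun a b ha hb => ha.add hb) Matrix.PosSemidef.zero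
    (fun n _ => h n)

/-- Hermitian extension of Lavergne's Cauchy–Schwarz inequality:
`(1/N) ∑ cₙ² rₙ − ((1/N) ∑ cₙ rₙ) ((1/N) ∑ rₙ)⁻¹ ((1/N) ∑ cₙ rₙ) ⪰ 0`. -/
theorem stmt5 {D N : ℕ}
    (r : Fin N → Matrix (Fin D) (Fin D) ℂ)
    (hr : ∀ n, (r n).PosSemidef)
    (hsum : (∑ n, r n).PosDef)
    (c : Fin N → ℝ) :
    ((N : ℝ)⁻¹ • ∑ n, ((c n) ^ 2 • r n) -
      ((N : ℝ)⁻¹ • ∑ n, (c n • r n)) * ((N : ℝ)⁻¹ • ∑ n, r n)⁻¹ *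
        ((N : ℝ)⁻¹ • ∑ n, (c n • r n))).PosSemidef := by
  classical
  rcases Nat.eq_zero_or_pos N with hN | hN
  · subst hN
    simp only [Finset.univ_eq_empty, Finset.sum_empty, smul_zero, zero_mul, mul_zero, sub_zero]
    exact Matrix.PosSemidef.zero
  set S := ∑ n, r n with hS
  set A := ∑ n, ((c n) ^ 2 • r n) with hA
  set B := ∑ n, (c n • r n) with hB
  haveI : Invertible S := hsum.isUnit.invertible
  -- key inequality
  have hBH : Bᴴ = B := by
    rw [hB, conjTranspose_sum]
    refine Finset.sum_congr rfl fun n _ => ?_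
    rw [conjTranspose_smul, star_trivial, (hr n).1.eq]
  have key : (A - B * S⁻¹ * B).PosSemidef := by
    have hschur := (Matrix.PosDef.fromBlocks₂₂ A B hsum).mp
    rw [hBH] at hschur
    apply hschur
    have hblocks : fromBlocks A B B S =
        ∑ n, fromBlocks ((c n)^2 • r n) (c n • r n) (c n • r n) (r n) := by
      ext (i | i) (j | j) <;>
        simp [Matrix.sum_apply, hA, hB, hS]
    rw [hblocks]
    apply sum_psd
    intro n
    have hP : fromBlocks ((c n)^2 • r n) (c n • r n) (c n • r n) (r n) =
        (fromCols ((c n : ℂ) • (1 : Matrix (Fin D) (Fin D) ℂ)) 1)ᴴ * (r n) *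
          (fromCols ((c n : ℂ) • (1 : Matrix (Fin D) (Fin D) ℂ)) 1) := by
      rw [conjTranspose_fromCols_eq_fromRows_conjTranspose]
      rw [fromRows_mul, fromRows_mul_fromCols]
      ext (i | i) (j | j) <;>
        simp [Matrix.mul_apply, Matrix.sum_apply, mul_comm, mul_assoc, mul_left_comm, sq,
          Complex.real_smul]
    rw [hP]
    exact (hr n).conjTranspose_mul_mul_same _
  -- rewrite goal as a nonneg scalar multiple of the key expression
  have hinv : ((N : ℝ)⁻¹ • S)⁻¹ = (N : ℝ) • S⁻¹ := by
    apply Matrix.inv_eq_left_inv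
    rw [Matrix.smul_mul, Matrix.mul_smul, smul_smul]
    rw [Matrix.nonsing_inv_mul S (Matrix.isUnit_iff_isUnit_det _ |>.1 hsum.isUnit)]
    have : (N : ℝ) * (N : ℝ)⁻¹ = 1 := by
      field_simp
    rw [this, one_smul]
  have hNne : (N : ℝ) ≠ 0 := Nat.cast_ne_zero.2 hN.ne'
  have hgoal : ((N : ℝ)⁻¹ • A - ((N : ℝ)⁻¹ • B) * ((N : ℝ)⁻¹ • S)⁻¹ * ((N : ℝ)⁻¹ • B))
      = (N : ℝ)⁻¹ • (A - B * S⁻¹ * B) := by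
    rw [hinv, smul_sub]
    congr 1
    rw [Matrix.smul_mul, Matrix.mul_smul, Matrix.smul_mul, Matrix.mul_smul, Matrix.smul_mul]
    rw [smul_smul, smul_smul]
    congr 1
    field_simp
  rw [hgoal]
  exact psd_smul key (by positivity)
end

section
/- Let r_1, …, r_N be Hermitian positive semi-definite D×D matrices with A₀ := (1/N) ∑_n r_n positive definite, let δ be a Hermitian D×D matrix, and set c_n := tr(r_n δ), A₁ := −(1/N) ∑_n c_n r_n, and A₂ := (2/N) ∑_n c_n² r_n. Then for every real s ≥ 0, the Hermitian matrix B_s := A₂/2 − A₁ (A₀ + sI)^{−1} A₁ is positive semi-definite; in particular B_s ⪰ A₂/2 − A₁ A₀^{−1} A₁ ⪰ 0 in the Loewner order. -/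
open Matrix
open scoped ComplexOrder

private lemma rsmul_eq {D : ℕ} (a : ℝ) (M : Matrix (Fin D) (Fin D) ℂ) :
    a • M = (a : ℂ) • M := by
  ext i j; simp [Complex.real_smul]

private lemma psd_real_smul {D : ℕ} {A : Matrix (Fin D) (Fin D) ℂ}
    (hA : A.PosSemidef) {a : ℝ} (ha : 0 ≤ a) : ((a : ℂ) • A).PosSemidef := by
  constructor
  · show _ = _
    simp [conjTranspose_smul, Complex.star_def, Complex.conj_ofReal, hA.1.eq]
  · intro x
    have h := hA.2 x
    exact (hA.smul (by exact_mod_cast ha : (0:ℂ) ≤ (a:ℂ))).2 x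

private lemma psd_sum {D N : ℕ}
    (f : Fin N → Matrix (Fin D) (Fin D) ℂ) (h : ∀ i, (f i).PosSemidef) :
    (∑ i, f i).PosSemidef := by
  classical
  induction (Finset.univ : Finset (Fin N)) using Finset.induction_on with
  | empty => simpa using Matrix.PosSemidef.zero
  | insert _ _ hx ih =>
    rw [Finset.sum_insert hx]
    exact (h _).add ih

private lemma expand_sum {D N : ℕ} (r : Fin N → Matrix (Fin D) (Fin D) ℂ)
    (c : Fin N → ℝ) (Z : Matrix (Fin D) (Fin D) ℂ) :
    ∑ n, (((c n : ℂ)) • 1 + Z)ᴴ * r n * (((c n : ℂ)) • 1 + Z)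
      = (∑ n, ((c n : ℂ)) ^ 2 • r n) + (∑ n, ((c n : ℂ)) • r n) * Z
        + Zᴴ * (∑ n, ((c n : ℂ)) • r n) + Zᴴ * (∑ n, r n) * Z := by
  simp only [Finset.sum_mul, Finset.mul_sum, ← Finset.sum_add_distrib]
  refine Finset.sum_congr rfl fun n _ => ?_
  have hst : star ((c n : ℂ)) = (c n : ℂ) := Complex.conj_ofReal _
  rw [conjTranspose_add, conjTranspose_smul, conjTranspose_one, hst]
  simp only [add_mul, mul_add, smul_mul_assoc, mul_smul_comm, one_mul, mul_one, smul_smul, sq,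
    smul_add]
  abel

/-- The matrix `B_s = A₂/2 − A₁ (A₀ + sI)⁻¹ A₁` is positive semi-definite for all `s ≥ 0`;
in particular `B_s ⪰ A₂/2 − A₁ A₀⁻¹ A₁ ⪰ 0` in the Loewner order. -/
theorem stmt6 {D N : ℕ} (hN : 0 < N)
    (r : Fin N → Matrix (Fin D) (Fin D) ℂ)
    (hr : ∀ n, (r n).PosSemidef)
    (δ : Matrix (Fin D) (Fin D) ℂ) (hδ : δ.IsHermitian)
    (c : Fin N → ℝ) (hc : ∀ n, c n = ((r n * δ).trace).re)
    (A₀ A₁ A₂ : Matrix (Fin D) (Fin D) ℂ)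
    (hA₀ : A₀ = (N : ℝ)⁻¹ • ∑ n, r n) (hA₀pd : A₀.PosDef)
    (hA₁ : A₁ = -((N : ℝ)⁻¹ • ∑ n, (c n • r n)))
    (hA₂ : A₂ = (2 : ℝ) • ((N : ℝ)⁻¹ • ∑ n, ((c n) ^ 2 • r n)))
    (s : ℝ) (hs : 0 ≤ s) :
    ((2 : ℝ)⁻¹ • A₂ - A₁ * (A₀ + s • 1)⁻¹ * A₁).PosSemidef ∧
    (((2 : ℝ)⁻¹ • A₂ - A₁ * (A₀ + s • 1)⁻¹ * A₁) -
      ((2 : ℝ)⁻¹ • A₂ - A₁ * A₀⁻¹ * A₁)).PosSemidef ∧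
    ((2 : ℝ)⁻¹ • A₂ - A₁ * A₀⁻¹ * A₁).PosSemidef := by
  classical
  have hNR : (0:ℝ) < (N:ℝ) := by exact_mod_cast hN
  have hNinv : (0:ℝ) ≤ (N:ℝ)⁻¹ := by positivity
  set ν : ℂ := (((N:ℝ)⁻¹ : ℝ) : ℂ) with hν
  -- convert real smuls to complex smuls
  have hA₀' : A₀ = ν • ∑ n, r n := by rw [hA₀, rsmul_eq]
  have hA₁' : A₁ = -(ν • ∑ n, ((c n : ℂ)) • r n) := by
    rw [hA₁, rsmul_eq]
    congr 2
  have hhalfA₂ : (2 : ℝ)⁻¹ • A₂ = ν • ∑ n, ((c n : ℂ)) ^ 2 • r n := by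
    rw [hA₂, smul_smul, show (2:ℝ)⁻¹ * 2 = 1 by norm_num, one_smul, rsmul_eq]
    congr 1
    refine Finset.sum_congr rfl fun n _ => ?_
    rw [rsmul_eq]
    push_cast
    rfl
  have hs1 : (s • (1 : Matrix (Fin D) (Fin D) ℂ)) = (s:ℂ) • 1 := rsmul_eq _ _
  rw [hs1]
  set P : Matrix (Fin D) (Fin D) ℂ := A₀ + (s:ℂ) • 1 with hP
  -- hermitian and invertibility facts
  have hrh : ∀ n, (r n)ᴴ = r n := fun n => (hr n).1
  have hA₀h : A₀.IsHermitian := hA₀pd.isHermitian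
  have hA₀d : IsUnit A₀.det := hA₀pd.det_pos.ne'.isUnit
  have hsmul1psd : ((s:ℂ) • (1 : Matrix (Fin D) (Fin D) ℂ)).PosSemidef :=
    psd_real_smul Matrix.PosSemidef.one hs
  have hPpd : P.PosDef := hA₀pd.add_posSemidef hsmul1psd
  have hPh : P.IsHermitian := hPpd.isHermitian
  have hPd : IsUnit P.det := hPpd.det_pos.ne'.isUnit
  have hA₁h : A₁ᴴ = A₁ := by
    rw [hA₁']
    simp only [conjTranspose_neg, conjTranspose_smul, conjTranspose_sum, hν,
      Complex.star_def, map_inv₀, Complex.conj_ofReal]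
    congr 2
    refine Finset.sum_congr rfl fun n _ => ?_
    rw [hrh]
  -- key identity for an invertible hermitian Q
  have key : ∀ Q : Matrix (Fin D) (Fin D) ℂ, Q.IsHermitian → IsUnit Q.det →
      ν • ∑ n, (((c n : ℂ)) • 1 + Q⁻¹ * A₁)ᴴ * r n * (((c n : ℂ)) • 1 + Q⁻¹ * A₁)
        = (2:ℝ)⁻¹ • A₂ - A₁ * Q⁻¹ * A₁ - A₁ * Q⁻¹ * A₁
          + A₁ * Q⁻¹ * A₀ * (Q⁻¹ * A₁) := by
    intro Q hQh hQd
    have hZH : (Q⁻¹ * A₁)ᴴ = A₁ * Q⁻¹ := by rw [conjTranspose_mul, hA₁h, hQh.inv.eq]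
    rw [expand_sum, hZH, smul_add, smul_add, smul_add, ← hhalfA₂]
    have h1 : ν • ((∑ n, ((c n : ℂ)) • r n) * (Q⁻¹ * A₁)) = -(A₁ * Q⁻¹ * A₁) := by
      rw [← smul_mul_assoc, show ν • (∑ n, ((c n : ℂ)) • r n) = -A₁ by rw [hA₁', neg_neg]]
      rw [Matrix.neg_mul, Matrix.mul_assoc]
    have h2 : ν • ((A₁ * Q⁻¹) * ∑ n, ((c n : ℂ)) • r n) = -(A₁ * Q⁻¹ * A₁) := by
      rw [← mul_smul_comm, show ν • (∑ n, ((c n : ℂ)) • r n) = -A₁ by rw [hA₁', neg_neg]]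
      rw [Matrix.mul_neg]
    have h3 : ν • ((A₁ * Q⁻¹) * (∑ n, r n) * (Q⁻¹ * A₁))
        = A₁ * Q⁻¹ * A₀ * (Q⁻¹ * A₁) := by
      conv_rhs => rw [hA₀']
      simp only [Matrix.mul_assoc, mul_smul_comm, smul_mul_assoc]
    rw [h1, h2, h3]
    abel
  -- part 3 : A₂/2 - A₁ A₀⁻¹ A₁ is PSD
  have hpsdform : ∀ Q : Matrix (Fin D) (Fin D) ℂ,
      (ν • ∑ n, (((c n : ℂ)) • 1 + Q)ᴴ * r n * (((c n : ℂ)) • 1 + Q)).PosSemidef := by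
    intro Q
    refine psd_real_smul (psd_sum _ fun n => (hr n).conjTranspose_mul_mul_same _) hNinv
  have key₀ := key A₀ hA₀h hA₀d
  have hcanc : A₁ * A₀⁻¹ * A₀ * (A₀⁻¹ * A₁) = A₁ * A₀⁻¹ * A₁ := by
    rw [Matrix.nonsing_inv_mul_cancel_right _ _ hA₀d, Matrix.mul_assoc]
  rw [hcanc] at key₀
  have part3 : ((2:ℝ)⁻¹ • A₂ - A₁ * A₀⁻¹ * A₁).PosSemidef := by
    have : (2:ℝ)⁻¹ • A₂ - A₁ * A₀⁻¹ * A₁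
        = ν • ∑ n, (((c n : ℂ)) • 1 + A₀⁻¹ * A₁)ᴴ * r n * (((c n : ℂ)) • 1 + A₀⁻¹ * A₁) := by
      rw [key₀]; abel
    rw [this]; exact hpsdform _
  -- part 2 : the difference is PSD
  have hZH : (P⁻¹ * A₁)ᴴ = A₁ * P⁻¹ := by rw [conjTranspose_mul, hA₁h, hPh.inv.eq]
  have hinvdiff : A₀⁻¹ - P⁻¹ = (s:ℂ) • (A₀⁻¹ * P⁻¹) := by
    have e1 : A₀⁻¹ - P⁻¹ = A₀⁻¹ * (P - A₀) * P⁻¹ := by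
      rw [Matrix.mul_sub, Matrix.sub_mul, Matrix.mul_nonsing_inv_cancel_right _ _ hPd,
        Matrix.nonsing_inv_mul _ hA₀d, Matrix.one_mul]
    rw [e1, hP, add_sub_cancel_left, mul_smul_comm, smul_mul_assoc, Matrix.mul_one]
  have hQmid : (1 : Matrix (Fin D) (Fin D) ℂ) + (s:ℂ) • A₀⁻¹ = P * A₀⁻¹ := by
    rw [hP, Matrix.add_mul, Matrix.mul_nonsing_inv _ hA₀d, smul_mul_assoc, Matrix.one_mul]
  have part2 : (((2:ℝ)⁻¹ • A₂ - A₁ * P⁻¹ * A₁) - ((2:ℝ)⁻¹ • A₂ - A₁ * A₀⁻¹ * A₁)).PosSemidef := by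
    have hdiff : ((2:ℝ)⁻¹ • A₂ - A₁ * P⁻¹ * A₁) - ((2:ℝ)⁻¹ • A₂ - A₁ * A₀⁻¹ * A₁)
        = (s:ℂ) • ((A₁ * P⁻¹) * ((1 : Matrix (Fin D) (Fin D) ℂ) + (s:ℂ) • A₀⁻¹) * (P⁻¹ * A₁)) := by
      have lhs_eq : ((2:ℝ)⁻¹ • A₂ - A₁ * P⁻¹ * A₁) - ((2:ℝ)⁻¹ • A₂ - A₁ * A₀⁻¹ * A₁)
          = A₁ * (A₀⁻¹ - P⁻¹) * A₁ := by
        rw [Matrix.mul_sub, Matrix.sub_mul]; abel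
      rw [lhs_eq, hinvdiff, hQmid]
      rw [mul_smul_comm, smul_mul_assoc]
      congr 1
      simp only [Matrix.mul_assoc]
      rw [Matrix.nonsing_inv_mul_cancel_left _ _ hPd]
    rw [hdiff]
    refine psd_real_smul ?_ hs
    have hmid : ((1 : Matrix (Fin D) (Fin D) ℂ) + (s:ℂ) • A₀⁻¹).PosSemidef :=
      Matrix.PosSemidef.one.add (psd_real_smul hA₀pd.inv.posSemidef hs)
    have := hmid.conjTranspose_mul_mul_same (P⁻¹ * A₁)
    rwa [hZH] at this
  -- part 1 : sum of part2 and part3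
  have part1 : ((2:ℝ)⁻¹ • A₂ - A₁ * P⁻¹ * A₁).PosSemidef := by
    have : (2:ℝ)⁻¹ • A₂ - A₁ * P⁻¹ * A₁
        = (((2:ℝ)⁻¹ • A₂ - A₁ * P⁻¹ * A₁) - ((2:ℝ)⁻¹ • A₂ - A₁ * A₀⁻¹ * A₁))
          + ((2:ℝ)⁻¹ • A₂ - A₁ * A₀⁻¹ * A₁) := by abel
    rw [this]; exact part2.add part3
  exact ⟨part1, part2, part3⟩
end

section
/- Let (ρ_k) be the iterates of the algorithm ρ₁ = I/D and ρ_{k+1} = exp(log ρ_k + log R(ρ_k)) / tr(exp(log ρ_k + log R(ρ_k))). Then every iterate ρ_k is a Hermitian positive definite matrix with tr(ρ_k) = 1, and tr(M_n ρ_k) > 0 for all n and all k; in particular R(ρ_k) is well-defined and positive definite at every iteration, so the algorithm is well-defined. -/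
open Matrix
open scoped ComplexOrder

section AuxLemmas

variable {D : ℕ}

lemma star_of_pos {c : ℂ} (hc : 0 < c) : star c = c := by
  have h := Complex.lt_def.mp hc
  exact Complex.ext (by simp) (by simp [h.2.symm])

lemma diag_dotProduct (B : Matrix (Fin D) (Fin D) ℂ) (i : Fin D) :
    star (Pi.single i 1) ⬝ᵥ B *ᵥ Pi.single i 1 = B i i := by
  have h1 : (star (Pi.single i 1) : Fin D → ℂ) = Pi.single i 1 := by
    ext j; by_cases h : j = i <;> simp [Pi.single_apply, h]
  rw [h1]
  simp [mulVec_single, single_dotProduct]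

lemma posDef_smul_complex {B : Matrix (Fin D) (Fin D) ℂ} (hB : B.PosDef) {c : ℂ}
    (hc : 0 < c) : (c • B).PosDef := by
  refine Matrix.PosDef.of_dotProduct_mulVec_pos ?_ ?_
  · rw [Matrix.IsHermitian, conjTranspose_smul, star_of_pos hc, hB.1.eq]
  · intro x hx
    rw [smul_mulVec, dotProduct_smul, smul_eq_mul]
    exact mul_pos hc (hB.dotProduct_mulVec_pos hx)

lemma posSemidef_real_smul {A : Matrix (Fin D) (Fin D) ℂ} (hA : A.PosSemidef) {c : ℝ}
    (hc : 0 ≤ c) : (c • A).PosSemidef := by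
  refine Matrix.PosSemidef.of_dotProduct_mulVec_nonneg ?_ ?_
  · rw [Matrix.IsHermitian, conjTranspose_smul, star_trivial, hA.1.eq]
  · intro x
    rw [smul_mulVec, dotProduct_smul, Complex.real_smul]
    exact mul_nonneg (by exact_mod_cast hc) (hA.dotProduct_mulVec_nonneg x)

lemma posSemidef_sum {ι : Type*} (s : Finset ι) (f : ι → Matrix (Fin D) (Fin D) ℂ)
    (hf : ∀ n ∈ s, (f n).PosSemidef) : (∑ n ∈ s, f n).PosSemidef := by
  classical
  induction s using Finset.cons_induction with
  | empty => simpa using Matrix.PosSemidef.zero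
  | cons a s ha ih =>
      rw [Finset.sum_cons]
      exact ((hf a (Finset.mem_cons_self a s)).add
        (ih fun n hn => hf n (Finset.mem_cons_of_mem hn)))

lemma sum_mulVec {ι : Type*} (s : Finset ι) (f : ι → Matrix (Fin D) (Fin D) ℂ)
    (v : Fin D → ℂ) : (∑ n ∈ s, f n) *ᵥ v = ∑ n ∈ s, f n *ᵥ v := by
  classical
  induction s using Finset.cons_induction with
  | empty => simp
  | cons a s ha ih => rw [Finset.sum_cons, Finset.sum_cons, Matrix.add_mulVec, ih]

lemma dotProduct_sum' {ι : Type*} (s : Finset ι) (u : Fin D → ℂ) (f : ι → Fin D → ℂ) :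
    u ⬝ᵥ (∑ n ∈ s, f n) = ∑ n ∈ s, u ⬝ᵥ f n := by
  classical
  induction s using Finset.cons_induction with
  | empty => simp
  | cons a s ha ih => rw [Finset.sum_cons, Finset.sum_cons, dotProduct_add, ih]

/-- The trace of a nonzero positive semidefinite matrix is positive. -/
lemma psd_trace_pos {B : Matrix (Fin D) (Fin D) ℂ} (hB : B.PosSemidef) (hBne : B ≠ 0) :
    0 < B.trace.re := by
  have hdiag : ∀ i, 0 ≤ B i i := fun i => diag_dotProduct B i ▸ hB.dotProduct_mulVec_nonneg (Pi.single i 1)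
  have hre : ∀ i, 0 ≤ (B i i).re := fun i => (Complex.le_def.mp (hdiag i)).1
  have htr : B.trace.re = ∑ i, (B i i).re := by
    simp [Matrix.trace, Matrix.diag, Complex.re_sum]
  rcases lt_or_eq_of_le (Finset.sum_nonneg fun i _ => hre i) with h | h
  · rw [htr]; exact h
  · exfalso; apply hBne
    have hz : ∀ i, (B i i).re = 0 := by
      intro i
      have := (Finset.sum_eq_zero_iff_of_nonneg fun i _ => hre i).mp h.symm
      exact this i (Finset.mem_univ i)
    have hBii : ∀ i, B i i = 0 := fun i =>
      Complex.ext (hz i) ((Complex.le_def.mp (hdiag i)).2.symm)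
    have hcol : ∀ i, B *ᵥ Pi.single i 1 = 0 := fun i =>
      (hB.dotProduct_mulVec_zero_iff (Pi.single i 1)).mp
        (by rw [diag_dotProduct]; exact hBii i)
    ext i j
    have := congrFun (hcol j) i
    simpa [mulVec_single] using this

/-- `tr(A ρ) > 0` for `A` PSD nonzero and `ρ` positive definite. -/
lemma trace_mul_pos {A ρ : Matrix (Fin D) (Fin D) ℂ} (hA : A.PosSemidef) (hAne : A ≠ 0)
    (hρ : ρ.PosDef) : 0 < (A * ρ).trace.re := by
  open scoped MatrixOrder in
  set S := CFC.sqrt ρ with hSdef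
  have hS : S * S = ρ := CFC.sqrt_mul_sqrt_self ρ hρ.posSemidef.nonneg
  have hSh : S.IsHermitian := (CFC.sqrt_nonneg ρ).posSemidef.1
  have hSunit : IsUnit S := by
    have hdet : S.det * S.det = ρ.det := by rw [← det_mul, hS]
    have : ρ.det ≠ 0 := ne_of_gt hρ.det_pos
    have hdS : S.det ≠ 0 := fun h => this (by rw [← hdet, h, mul_zero])
    exact (Matrix.isUnit_iff_isUnit_det S).mpr (isUnit_iff_ne_zero.mpr hdS)
  have hpsd : (S * A * S).PosSemidef := by
    have := hA.mul_mul_conjTranspose_same S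
    rwa [hSh.eq] at this
  have hne : S * A * S ≠ 0 := by
    intro h0
    apply hAne
    have hSd : IsUnit S.det := (Matrix.isUnit_iff_isUnit_det S).mp hSunit
    have : S⁻¹ * (S * A * S) * S⁻¹ = A := by
      simp only [← Matrix.mul_assoc]
      rw [Matrix.nonsing_inv_mul S hSd, Matrix.one_mul, Matrix.mul_assoc,
        Matrix.mul_nonsing_inv S hSd, Matrix.mul_one]
    rw [← this, h0, Matrix.mul_zero, Matrix.zero_mul]
  have hkey : (S * A * S).trace = (A * ρ).trace := by
    rw [Matrix.trace_mul_cycle, hS, Matrix.trace_mul_comm]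
  have := psd_trace_pos hpsd hne
  rwa [hkey] at this

/-- Conjugation of a positive definite matrix by a coisometry. -/
lemma posDef_conj {B C : Matrix (Fin D) (Fin D) ℂ} (hC : C.PosDef)
    (hB : B * Bᴴ = 1) : (B * C * Bᴴ).PosDef := by
  refine Matrix.PosDef.of_dotProduct_mulVec_pos (Matrix.isHermitian_mul_mul_conjTranspose _ hC.1) fun x hx => ?_
  have h1 : Bᴴ *ᵥ x ≠ 0 := by
    intro h
    apply hx
    have := congrArg (B *ᵥ ·) h
    simpa [Matrix.mulVec_mulVec, hB] using this
  have := hC.dotProduct_mulVec_pos h1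
  simpa only [star_mulVec, dotProduct_mulVec, vecMul_vecMul,
    conjTranspose_conjTranspose] using this

lemma matFun_isHermitian (g : ℝ → ℝ) (A : Matrix (Fin D) (Fin D) ℂ) :
    (matFun g A).IsHermitian := by
  unfold matFun
  split_ifs with hA
  · rw [Matrix.star_eq_conjTranspose]
    exact Matrix.isHermitian_mul_mul_conjTranspose _
      (Matrix.isHermitian_diagonal_of_self_adjoint _
        (funext fun i => by simp [Complex.conj_ofReal]))
  · exact Matrix.isHermitian_zero

lemma matFun_posDef {g : ℝ → ℝ} {A : Matrix (Fin D) (Fin D) ℂ} (hA : A.IsHermitian)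
    (hg : ∀ x, 0 < g x) : (matFun g A).PosDef := by
  unfold matFun
  rw [dif_pos hA, Matrix.star_eq_conjTranspose]
  refine posDef_conj ?_ ?_
  · exact Matrix.posDef_diagonal_iff.mpr fun i => by
      exact_mod_cast Complex.zero_lt_real.mpr (hg _)
  · rw [← Matrix.star_eq_conjTranspose]
    exact (Unitary.mem_iff.mp hA.eigenvectorUnitary.2).2

lemma posDef_trace_pos [Nonempty (Fin D)] {B : Matrix (Fin D) (Fin D) ℂ} (hB : B.PosDef) :
    0 < B.trace := by
  have hdiag : ∀ i, 0 < B i i := by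
    intro i
    have h1 := diag_dotProduct B i
    have := hB.dotProduct_mulVec_pos (x := Pi.single i 1) (by
      intro h
      have := congrFun h i
      simp at this)
    rwa [h1] at this
  exact Finset.sum_pos (fun i _ => hdiag i) Finset.univ_nonempty

lemma complex_inv_pos {c : ℂ} (hc : 0 < c) : 0 < c⁻¹ := by
  have h := Complex.lt_def.mp hc
  have hc' : c = ((c.re : ℝ) : ℂ) := Complex.ext (by simp) (by simp [h.2.symm])
  rw [hc', ← Complex.ofReal_inv]
  exact Complex.zero_lt_real.mpr (inv_pos.mpr (by simpa using h.1))

lemma Rmat_posDef {N : ℕ} (hN : 0 < N) (M : Fin N → Matrix (Fin D) (Fin D) ℂ)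
    (hM : ∀ n, (M n).PosSemidef)
    (hker : ∀ v : Fin D → ℂ, (∀ n, (M n) *ᵥ v = 0) → v = 0)
    {ρ : Matrix (Fin D) (Fin D) ℂ} (htr : ∀ n, 0 < (M n * ρ).trace.re) :
    (Rmat M ρ).PosDef := by
  have hc : ∀ n, (0:ℝ) ≤ ((M n * ρ).trace.re)⁻¹ := fun n => inv_nonneg.mpr (htr n).le
  have hpsd : (Rmat M ρ).PosSemidef := by
    apply posSemidef_real_smul _ (inv_nonneg.mpr (Nat.cast_nonneg N))
    exact posSemidef_sum _ _ fun n _ => posSemidef_real_smul (hM n) (hc n)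
  refine Matrix.PosDef.of_dotProduct_mulVec_pos hpsd.1 fun v hv => ?_
  obtain ⟨n₀, hn₀⟩ : ∃ n, M n *ᵥ v ≠ 0 := by
    by_contra h
    push_neg at h
    exact hv (hker v h)
  rw [Rmat, smul_mulVec, dotProduct_smul, sum_mulVec, dotProduct_sum',
    Complex.real_smul]
  apply mul_pos
  · exact Complex.zero_lt_real.mpr (inv_pos.mpr (by exact_mod_cast hN))
  have hterm : ∀ n, star v ⬝ᵥ ((((M n * ρ).trace.re)⁻¹ • M n) *ᵥ v)
      = ((((M n * ρ).trace.re)⁻¹ : ℝ) : ℂ) * (star v ⬝ᵥ M n *ᵥ v) := by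
    intro n
    rw [smul_mulVec, dotProduct_smul, Complex.real_smul]
  apply Finset.sum_pos'
  · intro n _
    rw [hterm n]
    exact mul_nonneg (by exact_mod_cast hc n) ((hM n).dotProduct_mulVec_nonneg v)
  · refine ⟨n₀, Finset.mem_univ _, ?_⟩
    rw [hterm n₀]
    apply mul_pos
    · exact Complex.zero_lt_real.mpr (inv_pos.mpr (htr n₀))
    · refine lt_of_le_of_ne ((hM n₀).dotProduct_mulVec_nonneg v) ?_
      intro h
      exact hn₀ (((hM n₀).dotProduct_mulVec_zero_iff v).mp h.symm)

end AuxLemmas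

/-- Well-definedness of the algorithm: every iterate is a positive definite density matrix
with `tr(Mₙ ρ_k) > 0` for all `n`, and `R(ρ_k)` is positive definite. -/
theorem stmt9 {D N : ℕ} (hD : 0 < D) (hN : 0 < N)
    (M : Fin N → Matrix (Fin D) (Fin D) ℂ)
    (hM : ∀ n, (M n).PosSemidef) (hMne : ∀ n, M n ≠ 0)
    (hker : ∀ v : Fin D → ℂ, (∀ n, (M n) *ᵥ v = 0) → v = 0)
    (ρ : ℕ → Matrix (Fin D) (Fin D) ℂ)
    (h0 : ρ 0 = (D : ℂ)⁻¹ • 1)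
    (hstep : ∀ k, ρ (k + 1) =
      ((mexp (mlog (ρ k) + mlog (Rmat M (ρ k)))).trace)⁻¹ •
        mexp (mlog (ρ k) + mlog (Rmat M (ρ k)))) :
    ∀ k, (ρ k).PosDef ∧ (ρ k).trace = 1 ∧ (∀ n, 0 < (M n * ρ k).trace.re) ∧
      (Rmat M (ρ k)).PosDef := by
  have hDne : Nonempty (Fin D) := ⟨⟨0, hD⟩⟩
  have key : ∀ k, (ρ k).PosDef ∧ (ρ k).trace = 1 := by
    intro k
    induction k with
    | zero =>
      rw [h0]
      have hDpos : (0:ℂ) < (D:ℂ)⁻¹ := by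
        rw [show ((D:ℂ))⁻¹ = (((D:ℝ)⁻¹ : ℝ) : ℂ) by push_cast; ring]
        exact Complex.zero_lt_real.mpr (inv_pos.mpr (by exact_mod_cast hD))
      refine ⟨posDef_smul_complex Matrix.PosDef.one hDpos, ?_⟩
      rw [trace_smul, trace_one]
      simp only [Fintype.card_fin, smul_eq_mul]
      exact inv_mul_cancel₀ (by exact_mod_cast hD.ne')
    | succ k ih =>
      obtain ⟨hpd, -⟩ := ih
      have htrn : ∀ n, 0 < (M n * ρ k).trace.re := fun n =>
        trace_mul_pos (hM n) (hMne n) hpd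
      have hR : (Rmat M (ρ k)).PosDef := Rmat_posDef hN M hM hker htrn
      have hHerm : (mlog (ρ k) + mlog (Rmat M (ρ k))).IsHermitian :=
        (matFun_isHermitian _ _).add (matFun_isHermitian _ _)
      have hexp : (mexp (mlog (ρ k) + mlog (Rmat M (ρ k)))).PosDef :=
        matFun_posDef hHerm Real.exp_pos
      have htrB : 0 < (mexp (mlog (ρ k) + mlog (Rmat M (ρ k)))).trace :=
        posDef_trace_pos hexp
      rw [hstep k]
      refine ⟨posDef_smul_complex hexp (complex_inv_pos htrB), ?_⟩
      rw [trace_smul, smul_eq_mul, inv_mul_cancel₀ (ne_of_gt htrB)]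
  intro k
  obtain ⟨hpd, htr1⟩ := key k
  have htrn : ∀ n, 0 < (M n * ρ k).trace.re := fun n =>
    trace_mul_pos (hM n) (hMne n) hpd
  exact ⟨hpd, htr1, htrn, Rmat_posDef hN M hM hker htrn⟩
end

section
/- (Iteration complexity of Cover's method.) Let (x_k) be the iterates of Cover's method: x₁ = (1/D, …, 1/D) and x_{k+1} = x_k ∘ R(x_k) (entrywise product), where R(x) = (1/N) ∑_{n=1}^N a_n / ⟨a_n, x⟩. Let x̄_k = (x₁ + ⋯ + x_k)/k. Then for every y in the probability simplex Δ with ⟨a_n, y⟩ > 0 for all n, and every k ∈ ℕ, one has g(x̄_k) − g(y) ≤ (log D)/k; in particular, for every ε > 0, g(x̄_k) − min_{y ∈ Δ} g(y) ≤ ε whenever k ≥ (1/ε)·log D. -/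
open Matrix

private lemma sum_log_le (N : ℕ) (hN : 0 < N) (t : Fin N → ℝ) (ht : ∀ n, 0 < t n) :
    ∑ n, Real.log (t n) ≤ N * Real.log ((N : ℝ)⁻¹ * ∑ n, t n) := by
  have hNR : (0:ℝ) < N := by exact_mod_cast hN
  have hsum : 0 < ∑ n, t n :=
    Finset.sum_pos (fun n _ => ht n) ⟨⟨0, hN⟩, Finset.mem_univ _⟩
  set T : ℝ := (N : ℝ)⁻¹ * ∑ n, t n with hTdef
  have hT : 0 < T := by positivity
  have h1 : ∀ n, Real.log (t n) ≤ t n / T - 1 + Real.log T := by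
    intro n
    have h := Real.log_le_sub_one_of_pos (div_pos (ht n) hT)
    rw [Real.log_div (ht n).ne' hT.ne'] at h
    linarith
  have h2 : ∑ n, Real.log (t n) ≤ ∑ n : Fin N, (t n / T - 1 + Real.log T) :=
    Finset.sum_le_sum fun n _ => h1 n
  have h3 : ∑ n : Fin N, (t n / T - 1 + Real.log T)
      = (∑ n, t n) / T - N + N * Real.log T := by
    rw [Finset.sum_add_distrib, Finset.sum_sub_distrib, ← Finset.sum_div]
    simp [Finset.card_univ, mul_comm]
  have h4 : (∑ n, t n) / T = N := by
    rw [hTdef]; field_simp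
  rw [h3, h4] at h2; linarith

private lemma prod_le_avg_pow (k : ℕ) (hk : 0 < k) (c : ℕ → ℝ)
    (hc : ∀ i ∈ Finset.range k, 0 ≤ c i) :
    ∏ i ∈ Finset.range k, c i ≤ ((∑ i ∈ Finset.range k, c i) / k) ^ k := by
  have hkR : (0:ℝ) < k := by exact_mod_cast hk
  by_cases h0 : ∃ i ∈ Finset.range k, c i = 0
  · obtain ⟨i, hi, hci⟩ := h0
    rw [Finset.prod_eq_zero hi hci]
    have : 0 ≤ (∑ i ∈ Finset.range k, c i) / k :=
      div_nonneg (Finset.sum_nonneg hc) hkR.le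
    positivity
  · push_neg at h0
    have hpos : ∀ i ∈ Finset.range k, 0 < c i :=
      fun i hi => lt_of_le_of_ne (hc i hi) (Ne.symm (h0 i hi))
    have hS : 0 < ∑ i ∈ Finset.range k, c i :=
      Finset.sum_pos hpos ⟨0, Finset.mem_range.mpr hk⟩
    set A : ℝ := (∑ i ∈ Finset.range k, c i) / k with hAdef
    have hA : 0 < A := by positivity
    have h1 : ∀ i ∈ Finset.range k, Real.log (c i) ≤ c i / A - 1 + Real.log A := by
      intro i hi
      have h := Real.log_le_sub_one_of_pos (div_pos (hpos i hi) hA)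
      rw [Real.log_div (hpos i hi).ne' hA.ne'] at h
      linarith
    have h2 : ∑ i ∈ Finset.range k, Real.log (c i)
        ≤ (∑ i ∈ Finset.range k, c i) / A - k + k * Real.log A := by
      have := Finset.sum_le_sum h1
      rw [Finset.sum_add_distrib, Finset.sum_sub_distrib, ← Finset.sum_div] at this
      simpa [Finset.card_range, mul_comm] using this
    have h4 : (∑ i ∈ Finset.range k, c i) / A = k := by
      rw [hAdef]; field_simp
    rw [h4] at h2
    have h5 : ∑ i ∈ Finset.range k, Real.log (c i) ≤ k * Real.log A := by linarith
    have h6 := Real.exp_le_exp.mpr h5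
    rw [Real.exp_sum] at h6
    have h7 : ∏ i ∈ Finset.range k, Real.exp (Real.log (c i))
        = ∏ i ∈ Finset.range k, c i :=
      Finset.prod_congr rfl fun i hi => Real.exp_log (hpos i hi)
    have h8 : Real.exp ((k : ℝ) * Real.log A) = A ^ k := by
      rw [Real.exp_nat_mul, Real.exp_log hA]
    rw [h7] at h6
    calc ∏ i ∈ Finset.range k, c i ≤ Real.exp ((k:ℝ) * Real.log A) := h6
      _ = A ^ k := h8

private lemma holder_pow (k N : ℕ) (hk : 0 < k) (hN : 0 < N)
    (u : Fin N → ℝ) (v : Fin N → ℕ → ℝ)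
    (hu : ∀ n, 0 ≤ u n) (hv : ∀ n i, 0 ≤ v n i)
    (hS : ∀ i ∈ Finset.range k, 0 < ∑ n, v n i)
    (huv : ∀ n, u n ^ k ≤ ∏ i ∈ Finset.range k, v n i) :
    (∑ n, u n) ^ k ≤ ∏ i ∈ Finset.range k, (∑ n, v n i) := by
  have hkR : (0:ℝ) < k := by exact_mod_cast hk
  have hP : 0 < ∏ i ∈ Finset.range k, (∑ n, v n i) := Finset.prod_pos hS
  set β : ℝ := (∏ i ∈ Finset.range k, (∑ n, v n i)) ^ ((k : ℝ)⁻¹) with hβdef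
  have hβ : 0 < β := Real.rpow_pos_of_pos hP _
  have hβk : β ^ k = ∏ i ∈ Finset.range k, (∑ n, v n i) := by
    rw [hβdef, ← Real.rpow_natCast ((∏ i ∈ Finset.range k, (∑ n, v n i)) ^ ((k:ℝ)⁻¹)) k,
      ← Real.rpow_mul hP.le, inv_mul_cancel₀ (by exact_mod_cast hk.ne'), Real.rpow_one]
  have key : ∀ n, u n ≤ ((∑ i ∈ Finset.range k, v n i / (∑ m, v m i)) / k) * β := by
    intro n
    have hM : 0 ≤ (∑ i ∈ Finset.range k, v n i / (∑ m, v m i)) / k := by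
      apply div_nonneg _ hkR.le
      exact Finset.sum_nonneg fun i hi => div_nonneg (hv n i) (hS i hi).le
    refine le_of_pow_le_pow_left₀ hk.ne' (by positivity) ?_
    calc u n ^ k ≤ ∏ i ∈ Finset.range k, v n i := huv n
      _ = (∏ i ∈ Finset.range k, v n i / (∑ m, v m i)) * ∏ i ∈ Finset.range k, (∑ m, v m i) := by
          rw [← Finset.prod_mul_distrib]
          exact Finset.prod_congr rfl fun i hi => (div_mul_cancel₀ _ (hS i hi).ne').symm
      _ ≤ ((∑ i ∈ Finset.range k, v n i / (∑ m, v m i)) / k) ^ k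
            * ∏ i ∈ Finset.range k, (∑ m, v m i) := by
          refine mul_le_mul_of_nonneg_right ?_ hP.le
          exact prod_le_avg_pow k hk _ (fun i hi => div_nonneg (hv n i) (hS i hi).le)
      _ = (((∑ i ∈ Finset.range k, v n i / (∑ m, v m i)) / k) * β) ^ k := by
          rw [mul_pow, hβk]
  have hsum : ∑ n, u n ≤ β := by
    have h1 : ∑ n, u n ≤ ∑ n, ((∑ i ∈ Finset.range k, v n i / (∑ m, v m i)) / k) * β :=
      Finset.sum_le_sum fun n _ => key n
    have h2 : ∑ n, ((∑ i ∈ Finset.range k, v n i / (∑ m, v m i)) / k) * β = β := by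
      rw [← Finset.sum_mul, ← Finset.sum_div]
      rw [Finset.sum_comm]
      have h3 : ∀ i ∈ Finset.range k, (∑ n, v n i / (∑ m, v m i)) = 1 := by
        intro i hi
        rw [← Finset.sum_div, div_self (hS i hi).ne']
      rw [Finset.sum_congr rfl h3]
      simp [Finset.card_range]
      field_simp
    rw [h2] at h1; exact h1
  calc (∑ n, u n) ^ k ≤ β ^ k :=
        pow_le_pow_left₀ (Finset.sum_nonneg fun n _ => hu n) hsum k
    _ = _ := hβk

/-- `g(x) = (1/N) ∑ₙ −log⟨aₙ, x⟩`. -/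
noncomputable def gobj {D N : ℕ} (a : Fin N → Fin D → ℝ) (x : Fin D → ℝ) : ℝ :=
  (N : ℝ)⁻¹ * ∑ n, (- Real.log (a n ⬝ᵥ x))

/-- `R(x) = (1/N) ∑ₙ aₙ / ⟨aₙ, x⟩`. -/
noncomputable def Rvec {D N : ℕ} (a : Fin N → Fin D → ℝ) (x : Fin D → ℝ) : Fin D → ℝ :=
  (N : ℝ)⁻¹ • ∑ n, ((a n ⬝ᵥ x)⁻¹ • a n)

/-- Iteration complexity of Cover's method. -/
theorem stmt11 {D N : ℕ} (hD : 0 < D) (hN : 0 < N)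
    (a : Fin N → Fin D → ℝ)
    (ha : ∀ n d, 0 ≤ a n d) (hane : ∀ n, a n ≠ 0)
    (hcol : ∀ d, ∃ n, 0 < a n d)
    (x : ℕ → Fin D → ℝ)
    (h0 : x 0 = fun _ => (D : ℝ)⁻¹)
    (hstep : ∀ k, x (k + 1) = x k * Rvec a (x k))
    (xbar : ℕ → Fin D → ℝ)
    (hbar : ∀ k, xbar k = (k : ℝ)⁻¹ • ∑ i ∈ Finset.range k, x i) :
    (∀ y : Fin D → ℝ, (∀ d, 0 ≤ y d) → ∑ d, y d = 1 → (∀ n, 0 < a n ⬝ᵥ y) →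
      ∀ k : ℕ, 0 < k → gobj a (xbar k) - gobj a y ≤ Real.log D / k) ∧
    (∀ ε : ℝ, 0 < ε → ∀ k : ℕ, 0 < k → (1 / ε) * Real.log D ≤ (k : ℝ) →
      ∀ y : Fin D → ℝ, (∀ d, 0 ≤ y d) → ∑ d, y d = 1 → (∀ n, 0 < a n ⬝ᵥ y) →
        gobj a (xbar k) - gobj a y ≤ ε) := by
  have hNR : (0:ℝ) < N := by exact_mod_cast hN
  have hDR : (0:ℝ) < D := by exact_mod_cast hD
  -- dot products with positive vectors are positive
  have hdot : ∀ (z : Fin D → ℝ), (∀ d, 0 < z d) → ∀ n, 0 < a n ⬝ᵥ z := by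
    intro z hz n
    obtain ⟨d0, hd0⟩ : ∃ d, 0 < a n d := by
      by_contra h
      push_neg at h
      exact hane n (funext fun d => le_antisymm (h d) (ha n d))
    exact Finset.sum_pos' (fun d _ => mul_nonneg (ha n d) (hz d).le)
      ⟨d0, Finset.mem_univ _, mul_pos hd0 (hz d0)⟩
  have hRapp : ∀ (z : Fin D → ℝ) (d : Fin D),
      Rvec a z d = (N:ℝ)⁻¹ * ∑ n, (a n ⬝ᵥ z)⁻¹ * a n d := by
    intro z d
    simp [Rvec, Finset.sum_apply, Pi.smul_apply, smul_eq_mul]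
  have hRpos : ∀ (z : Fin D → ℝ), (∀ d, 0 < z d) → ∀ d, 0 < Rvec a z d := by
    intro z hz d
    rw [hRapp]
    obtain ⟨n0, hn0⟩ := hcol d
    have h1 : 0 < ∑ n, (a n ⬝ᵥ z)⁻¹ * a n d :=
      Finset.sum_pos' (fun n _ => mul_nonneg (inv_nonneg.mpr (hdot z hz n).le) (ha n d))
        ⟨n0, Finset.mem_univ _, mul_pos (inv_pos.mpr (hdot z hz n0)) hn0⟩
    positivity
  -- iterates stay in the simplex
  have hx : ∀ i, (∀ d, 0 < x i d) ∧ ∑ d, x i d = 1 := by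
    intro i
    induction i with
    | zero =>
      rw [h0]
      constructor
      · intro d; positivity
      · simp only [Finset.sum_const, Finset.card_univ, Fintype.card_fin, nsmul_eq_mul]
        exact mul_inv_cancel₀ hDR.ne'
    | succ i ih =>
      constructor
      · intro d
        rw [hstep i, Pi.mul_apply]
        exact mul_pos (ih.1 d) (hRpos _ ih.1 d)
      · rw [hstep i]
        calc ∑ d, (x i * Rvec a (x i)) d
            = ∑ d, ∑ n, (N:ℝ)⁻¹ * ((a n ⬝ᵥ x i)⁻¹ * (a n d * x i d)) := by
              refine Finset.sum_congr rfl fun d _ => ?_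
              rw [Pi.mul_apply, hRapp, mul_comm (x i d), mul_assoc, Finset.sum_mul,
                Finset.mul_sum]
              exact Finset.sum_congr rfl fun n _ => by ring
          _ = ∑ n, (N:ℝ)⁻¹ * ((a n ⬝ᵥ x i)⁻¹ * (a n ⬝ᵥ x i)) := by
              rw [Finset.sum_comm]
              refine Finset.sum_congr rfl fun n _ => ?_
              rw [← Finset.mul_sum, ← Finset.mul_sum]
              rfl
          _ = 1 := by
              rw [Finset.sum_congr rfl fun (n : Fin N) _ => by
                rw [inv_mul_cancel₀ (hdot _ ih.1 n).ne', mul_one]]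
              simp only [Finset.sum_const, Finset.card_univ, Fintype.card_fin, nsmul_eq_mul]
              exact mul_inv_cancel₀ hNR.ne'
  -- product formula for the iterates
  have hxpr : ∀ (m : ℕ) (d : Fin D),
      x m d = (D:ℝ)⁻¹ * ∏ i ∈ Finset.range m, Rvec a (x i) d := by
    intro m d
    induction m with
    | zero => simp [h0]
    | succ m ih =>
      rw [Finset.prod_range_succ, hstep m, Pi.mul_apply, ih]
      ring
  have hxle1 : ∀ (m : ℕ) (d : Fin D), x m d ≤ 1 := by
    intro m d
    have h1 : x m d ≤ ∑ d', x m d' :=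
      Finset.single_le_sum (fun d' _ => ((hx m).1 d').le) (Finset.mem_univ d)
    rw [(hx m).2] at h1
    exact h1
  have partA : ∀ y : Fin D → ℝ, (∀ d, 0 ≤ y d) → ∑ d, y d = 1 → (∀ n, 0 < a n ⬝ᵥ y) →
      ∀ k : ℕ, 0 < k → gobj a (xbar k) - gobj a y ≤ Real.log D / k := by
    intro y hy hysum hydot k hk
    have hkR : (0:ℝ) < k := by exact_mod_cast hk
    have hxbarapp : ∀ d, xbar k d = (k:ℝ)⁻¹ * ∑ i ∈ Finset.range k, x i d := by
      intro d
      rw [hbar k]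
      simp [Finset.sum_apply]
    have hxbpos : ∀ d, 0 < xbar k d := by
      intro d
      rw [hxbarapp]
      have h1 : 0 < ∑ i ∈ Finset.range k, x i d :=
        Finset.sum_pos (fun i _ => (hx i).1 d) (Finset.nonempty_range_iff.mpr hk.ne')
      positivity
    have hdxbpos : ∀ n, 0 < a n ⬝ᵥ xbar k := hdot _ hxbpos
    have hdxb : ∀ n, a n ⬝ᵥ xbar k = (∑ i ∈ Finset.range k, (a n ⬝ᵥ x i)) / k := by
      intro n
      show ∑ d, a n d * xbar k d = _
      calc ∑ d, a n d * xbar k d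
          = ∑ d, ∑ i ∈ Finset.range k, (k:ℝ)⁻¹ * (a n d * x i d) := by
            refine Finset.sum_congr rfl fun d _ => ?_
            rw [hxbarapp, Finset.mul_sum, Finset.mul_sum]
            exact Finset.sum_congr rfl fun i _ => by ring
        _ = ∑ i ∈ Finset.range k, (k:ℝ)⁻¹ * (a n ⬝ᵥ x i) := by
            rw [Finset.sum_comm]
            refine Finset.sum_congr rfl fun i _ => ?_
            rw [← Finset.mul_sum]
            rfl
        _ = (∑ i ∈ Finset.range k, (a n ⬝ᵥ x i)) / k := by
            rw [← Finset.mul_sum, inv_mul_eq_div]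
    -- Key bound: Rvec a (xbar k) d ≤ D ^ (1/k)
    have hkey : ∀ d, Rvec a (xbar k) d ≤ (D:ℝ) ^ ((k:ℝ)⁻¹) := by
      intro d
      have hsumv : ∀ i, (∑ n, a n d * (a n ⬝ᵥ x i)⁻¹) = N * Rvec a (x i) d := by
        intro i
        rw [hRapp, ← mul_assoc, mul_inv_cancel₀ hNR.ne', one_mul]
        exact Finset.sum_congr rfl fun n _ => mul_comm _ _
      have hsumu : (∑ n, a n d * (a n ⬝ᵥ xbar k)⁻¹) = N * Rvec a (xbar k) d := by
        rw [hRapp, ← mul_assoc, mul_inv_cancel₀ hNR.ne', one_mul]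
        exact Finset.sum_congr rfl fun n _ => mul_comm _ _
      have hh := holder_pow k N hk hN
        (fun n => a n d * (a n ⬝ᵥ xbar k)⁻¹)
        (fun n i => a n d * (a n ⬝ᵥ x i)⁻¹)
        (fun n => mul_nonneg (ha n d) (inv_nonneg.mpr (hdxbpos n).le))
        (fun n i => mul_nonneg (ha n d) (inv_nonneg.mpr (hdot _ (hx i).1 n).le))
        (fun i _ => by rw [hsumv i]; exact mul_pos hNR (hRpos _ (hx i).1 d))
        (fun n => by
          -- u n ^ k ≤ ∏ v n i  via AM-GM on the dot products
          have hamgm : ∏ i ∈ Finset.range k, (a n ⬝ᵥ x i) ≤ (a n ⬝ᵥ xbar k) ^ k := by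
            rw [hdxb n]
            exact prod_le_avg_pow k hk _ (fun i _ => (hdot _ (hx i).1 n).le)
          have hppos : 0 < ∏ i ∈ Finset.range k, (a n ⬝ᵥ x i) :=
            Finset.prod_pos fun i _ => hdot _ (hx i).1 n
          have hinv : ((a n ⬝ᵥ xbar k) ^ k)⁻¹ ≤ (∏ i ∈ Finset.range k, (a n ⬝ᵥ x i))⁻¹ :=
            inv_anti₀ hppos hamgm
          calc (a n d * (a n ⬝ᵥ xbar k)⁻¹) ^ k
              = a n d ^ k * ((a n ⬝ᵥ xbar k) ^ k)⁻¹ := by rw [mul_pow, inv_pow]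
            _ ≤ a n d ^ k * (∏ i ∈ Finset.range k, (a n ⬝ᵥ x i))⁻¹ :=
                mul_le_mul_of_nonneg_left hinv (pow_nonneg (ha n d) k)
            _ = ∏ i ∈ Finset.range k, (a n d * (a n ⬝ᵥ x i)⁻¹) := by
                rw [Finset.prod_mul_distrib, Finset.prod_const, Finset.card_range,
                  ← Finset.prod_inv_distrib])
      rw [hsumu] at hh
      have hprods : ∏ i ∈ Finset.range k, (∑ n, a n d * (a n ⬝ᵥ x i)⁻¹)
          = (N:ℝ) ^ k * ((D:ℝ) * x k d) := by
        calc ∏ i ∈ Finset.range k, (∑ n, a n d * (a n ⬝ᵥ x i)⁻¹)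
            = ∏ i ∈ Finset.range k, ((N:ℝ) * Rvec a (x i) d) := by
              exact Finset.prod_congr rfl fun i _ => hsumv i
          _ = (N:ℝ) ^ k * ∏ i ∈ Finset.range k, Rvec a (x i) d := by
              rw [Finset.prod_mul_distrib, Finset.prod_const, Finset.card_range]
          _ = (N:ℝ) ^ k * ((D:ℝ) * x k d) := by
              rw [hxpr k d]
              field_simp
      rw [hprods, mul_pow] at hh
      have hRk : Rvec a (xbar k) d ^ k ≤ (D:ℝ) * x k d := by
        have hNk : (0:ℝ) < (N:ℝ) ^ k := by positivity
        exact le_of_mul_le_mul_left (by linarith [hh]) hNk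
      have hRkD : Rvec a (xbar k) d ^ k ≤ (D:ℝ) := by
        calc Rvec a (xbar k) d ^ k ≤ (D:ℝ) * x k d := hRk
          _ ≤ (D:ℝ) * 1 := mul_le_mul_of_nonneg_left (hxle1 k d) hDR.le
          _ = (D:ℝ) := mul_one _
      have hDk : ((D:ℝ) ^ ((k:ℝ)⁻¹)) ^ k = (D:ℝ) := by
        rw [← Real.rpow_natCast ((D:ℝ) ^ ((k:ℝ)⁻¹)) k, ← Real.rpow_mul hDR.le,
          inv_mul_cancel₀ hkR.ne', Real.rpow_one]
      refine le_of_pow_le_pow_left₀ hk.ne' (Real.rpow_nonneg hDR.le _) ?_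
      rw [hDk]
      exact hRkD
    -- Jensen step and conclusion
    set t : Fin N → ℝ := fun n => (a n ⬝ᵥ y) * (a n ⬝ᵥ xbar k)⁻¹ with htdef
    have htpos : ∀ n, 0 < t n := fun n => mul_pos (hydot n) (inv_pos.mpr (hdxbpos n))
    have hgdiff : gobj a (xbar k) - gobj a y = (N:ℝ)⁻¹ * ∑ n, Real.log (t n) := by
      simp only [gobj]
      rw [← mul_sub, ← Finset.sum_sub_distrib]
      congr 1
      refine Finset.sum_congr rfl fun n _ => ?_
      rw [htdef]
      simp only
      rw [Real.log_mul (hydot n).ne' (inv_ne_zero (hdxbpos n).ne'), Real.log_inv]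
      ring
    have hT : (N:ℝ)⁻¹ * ∑ n, t n = ∑ d, y d * Rvec a (xbar k) d := by
      calc (N:ℝ)⁻¹ * ∑ n, t n
          = ∑ n, ∑ d, (N:ℝ)⁻¹ * ((a n ⬝ᵥ xbar k)⁻¹ * (a n d * y d)) := by
            rw [Finset.mul_sum]
            refine Finset.sum_congr rfl fun n _ => ?_
            rw [htdef]
            simp only
            rw [show (a n ⬝ᵥ y) = ∑ d, a n d * y d from rfl, Finset.sum_mul, Finset.mul_sum]
            exact Finset.sum_congr rfl fun d _ => by ring
        _ = ∑ d, y d * Rvec a (xbar k) d := by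
            rw [Finset.sum_comm]
            refine Finset.sum_congr rfl fun d _ => ?_
            rw [hRapp, Finset.mul_sum, Finset.mul_sum]
            exact Finset.sum_congr rfl fun n _ => by ring
    have hTpos : 0 < (N:ℝ)⁻¹ * ∑ n, t n := by
      have h1 : 0 < ∑ n, t n :=
        Finset.sum_pos (fun n _ => htpos n) ⟨⟨0, hN⟩, Finset.mem_univ _⟩
      positivity
    have hTle : (N:ℝ)⁻¹ * ∑ n, t n ≤ (D:ℝ) ^ ((k:ℝ)⁻¹) := by
      rw [hT]
      calc ∑ d, y d * Rvec a (xbar k) d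
          ≤ ∑ d, y d * (D:ℝ) ^ ((k:ℝ)⁻¹) :=
            Finset.sum_le_sum fun d _ => mul_le_mul_of_nonneg_left (hkey d) (hy d)
        _ = (D:ℝ) ^ ((k:ℝ)⁻¹) := by rw [← Finset.sum_mul, hysum, one_mul]
    calc gobj a (xbar k) - gobj a y = (N:ℝ)⁻¹ * ∑ n, Real.log (t n) := hgdiff
      _ ≤ (N:ℝ)⁻¹ * ((N:ℝ) * Real.log ((N:ℝ)⁻¹ * ∑ n, t n)) :=
          mul_le_mul_of_nonneg_left (sum_log_le N hN t htpos) (inv_nonneg.mpr hNR.le)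
      _ = Real.log ((N:ℝ)⁻¹ * ∑ n, t n) := by
          rw [← mul_assoc, inv_mul_cancel₀ hNR.ne', one_mul]
      _ ≤ Real.log ((D:ℝ) ^ ((k:ℝ)⁻¹)) := Real.log_le_log hTpos hTle
      _ = Real.log D / k := by rw [Real.log_rpow hDR, inv_mul_eq_div]
  refine ⟨partA, ?_⟩
  intro ε hε k hk hkε y hy hysum hydot
  have hkR : (0:ℝ) < k := by exact_mod_cast hk
  have h1 := partA y hy hysum hydot k hk
  have h2 : Real.log D ≤ ε * k := by
    have h3 := mul_le_mul_of_nonneg_left hkε hε.le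
    rw [one_div, ← mul_assoc, mul_inv_cancel₀ hε.ne', one_mul] at h3
    exact h3
  calc gobj a (xbar k) - gobj a y ≤ Real.log D / k := h1
    _ ≤ ε := by rw [div_le_iff₀ hkR]; linarith
end

section
/- Let x be a vector with strictly positive entries satisfying ∑_d x_d = 1 and ⟨a_n, x⟩ > 0 for all n. Then for every y in the probability simplex Δ with ⟨a_n, y⟩ > 0 for all n, g(x) − g(y) ≤ log( max_{1 ≤ d ≤ D} (R(x))_d ), where R(x) = (1/N) ∑_{n=1}^N a_n / ⟨a_n, x⟩. -/
open Matrix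

/-- Classical analog of Lemma 1: `g(x) − g(y) ≤ log max_d (R(x))_d`. -/
theorem stmt12 {D N : ℕ} (hD : 0 < D) (hN : 0 < N)
    (a : Fin N → Fin D → ℝ)
    (ha : ∀ n d, 0 ≤ a n d) (hane : ∀ n, a n ≠ 0)
    (x : Fin D → ℝ) (hx : ∀ d, 0 < x d) (hxsum : ∑ d, x d = 1)
    (hxpos : ∀ n, 0 < a n ⬝ᵥ x)
    (y : Fin D → ℝ) (hy : ∀ d, 0 ≤ y d) (hysum : ∑ d, y d = 1)
    (hypos : ∀ n, 0 < a n ⬝ᵥ y) :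
    gobj a x - gobj a y ≤ Real.log (⨆ d, Rvec a x d) := by
  have hNpos : (0:ℝ) < N := Nat.cast_pos.mpr hN
  set r : Fin N → ℝ := fun n => (a n ⬝ᵥ y) / (a n ⬝ᵥ x) with hr
  have hrpos : ∀ n, 0 < r n := fun n => div_pos (hypos n) (hxpos n)
  -- step 1 : g x - g y = (1/N) ∑ log (r n)
  have h1 : gobj a x - gobj a y = (N:ℝ)⁻¹ * ∑ n, Real.log (r n) := by
    rw [gobj, gobj, ← mul_sub, ← Finset.sum_sub_distrib]
    congr 1
    apply Finset.sum_congr rfl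
    intro n _
    rw [hr]
    rw [Real.log_div (ne_of_gt (hypos n)) (ne_of_gt (hxpos n))]
    ring
  -- Jensen
  have hjensen : (N:ℝ)⁻¹ * ∑ n, Real.log (r n) ≤
      Real.log ((N:ℝ)⁻¹ * ∑ n, r n) := by
    have := (strictConcaveOn_log_Ioi.concaveOn).le_map_sum
      (t := Finset.univ) (w := fun _ : Fin N => (N:ℝ)⁻¹) (p := r)
      (fun i _ => by positivity)
      (by simp [Finset.sum_const, mul_inv_cancel₀ (ne_of_gt hNpos)])
      (fun i _ => hrpos i)
    simpa [smul_eq_mul, Finset.mul_sum] using this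
  -- identify (1/N) ∑ r n with R ⬝ᵥ y
  have h2 : (N:ℝ)⁻¹ * ∑ n, r n = Rvec a x ⬝ᵥ y := by
    rw [Rvec]
    simp only [dotProduct, Pi.smul_apply, Finset.sum_apply, smul_eq_mul, Finset.mul_sum,
      Finset.sum_mul]
    rw [Finset.sum_comm]
    apply Finset.sum_congr rfl
    intro n _
    simp only [hr, dotProduct, div_eq_mul_inv, Finset.sum_mul, Finset.mul_sum]
    apply Finset.sum_congr rfl
    intro d _
    ring
  have hRy_pos : 0 < Rvec a x ⬝ᵥ y := by
    rw [← h2]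
    have : 0 < ∑ n, r n :=
      Finset.sum_pos (fun n _ => hrpos n) (Finset.univ_nonempty_iff.mpr ⟨⟨0, hN⟩⟩)
    positivity
  -- R ⬝ᵥ y ≤ sup
  have hbdd : BddAbove (Set.range (Rvec a x)) := Set.Finite.bddAbove (Set.finite_range _)
  have h3 : Rvec a x ⬝ᵥ y ≤ ⨆ d, Rvec a x d := by
    calc Rvec a x ⬝ᵥ y = ∑ d, Rvec a x d * y d := rfl
      _ ≤ ∑ d, (⨆ d, Rvec a x d) * y d := by
          apply Finset.sum_le_sum
          intro d _
          exact mul_le_mul_of_nonneg_right (le_ciSup hbdd d) (hy d)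
      _ = ⨆ d, Rvec a x d := by rw [← Finset.mul_sum, hysum, mul_one]
  calc gobj a x - gobj a y = (N:ℝ)⁻¹ * ∑ n, Real.log (r n) := h1
    _ ≤ Real.log ((N:ℝ)⁻¹ * ∑ n, r n) := hjensen
    _ = Real.log (Rvec a x ⬝ᵥ y) := by rw [h2]
    _ ≤ Real.log (⨆ d, Rvec a x d) := Real.log_le_log hRy_pos h3
end
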